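/- arXiv:2212.14061 — 2 statements merged into one kernel-verified Lean document; each statement's English description precedes it below -/
import Mathlib

section
/- Let γ ∈ (0,1]. Then there exists a constant C₁ > 0 (depending on L, D, D', γ and Σ_k q_k (λ'_{k+D'})^γ) such that for all 0 ≤ t' ≤ t: Σ_{k=1}^∞ q_k Σ_{n=1}^∞ Σ_{m=1}^∞ ρ_n^k ρ_m^k · √(λ_n' λ_m') · [ ∫_{t'}^t e^{−(λ_n'+λ_m')(t−u)} du + ∫₀^{t'} (e^{−λ_n'(t'−u)} − e^{−λ_n'(t−u)})·(e^{−λ_m'(t'−u)} − e^{−λ_m'(t−u)}) du ] ≤ C₁ · (t − t')^γ. (By the Itô isometry this is exactly the temporal-increment second-moment bound 𝔼|∇(w_Δ(t,x) − w_Δ(t',x))|² ≤ C₁|t−t'|^γ, uniform in x, of the paper's Appendix B Lemma.) -/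
open MeasureTheory

/-- The Dirichlet eigenvalues of the Laplacian, `λ'_{n+1} = (π(n+1)/L)²`. -/
noncomputable def lamP (L : ℝ) (n : ℕ) : ℝ := (Real.pi * (n + 1) / L) ^ 2



lemma exp_integral (c a b : ℝ) (hc : 0 < c) :
    ∫ u in a..b, Real.exp (-c * (b - u)) = (1 - Real.exp (-c * (b - a))) / c := by
  rw [intervalIntegral.integral_comp_sub_left (fun x => Real.exp (-c * x)) b]
  rw [intervalIntegral.integral_comp_mul_left Real.exp (show -c ≠ 0 by linarith)]
  rw [integral_exp]
  rw [smul_eq_mul]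
  rw [show -c * (b - b) = 0 by ring, Real.exp_zero]
  have hc' : c ≠ 0 := ne_of_gt hc
  field_simp
  ring_nf

lemma one_sub_exp_nonneg {x : ℝ} (hx : 0 ≤ x) : 0 ≤ 1 - Real.exp (-x) := by
  have : Real.exp (-x) ≤ Real.exp 0 := Real.exp_le_exp.2 (by linarith)
  rw [Real.exp_zero] at this; linarith

lemma one_sub_exp_le_rpow {x p : ℝ} (hx : 0 ≤ x) (hp0 : 0 < p) (hp1 : p ≤ 1) :
    1 - Real.exp (-x) ≤ x ^ p := by
  rcases le_or_gt 1 x with h | h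
  · have h1 : 1 - Real.exp (-x) ≤ 1 := by have := Real.exp_pos (-x); linarith
    refine h1.trans ?_
    calc (1:ℝ) = 1 ^ p := (Real.one_rpow p).symm
      _ ≤ x ^ p := Real.rpow_le_rpow (by norm_num) h hp0.le
  · have h1 : 1 - Real.exp (-x) ≤ x := by have := Real.add_one_le_exp (-x); linarith
    refine h1.trans ?_
    rcases eq_or_lt_of_le hx with heq | hx0
    · rw [← heq, Real.zero_rpow hp0.ne']
    · calc x = x ^ (1:ℝ) := (Real.rpow_one x).symm
        _ ≤ x ^ p := Real.rpow_le_rpow_of_exponent_ge hx0 h.le hp1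

lemma I2_eval (lamn lamm t' t : ℝ) (hn : 0 < lamn) (hm : 0 < lamm) :
    (∫ u in (0:ℝ)..t',
        (Real.exp (-lamn * (t' - u)) - Real.exp (-lamn * (t - u)))
          * (Real.exp (-lamm * (t' - u)) - Real.exp (-lamm * (t - u))))
    = (1 - Real.exp (-lamn * (t - t'))) * (1 - Real.exp (-lamm * (t - t')))
        * ((1 - Real.exp (-(lamn + lamm) * t')) / (lamn + lamm)) := by
  have h1 : ∀ (lam u : ℝ), Real.exp (-lam * (t - u))
      = Real.exp (-lam * (t' - u)) * Real.exp (-lam * (t - t')) := by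
    intro lam u; rw [← Real.exp_add]; congr 1; ring
  have h2 : ∀ u : ℝ, (Real.exp (-lamn * (t' - u)) - Real.exp (-lamn * (t - u)))
      * (Real.exp (-lamm * (t' - u)) - Real.exp (-lamm * (t - u)))
      = ((1 - Real.exp (-lamn * (t - t'))) * (1 - Real.exp (-lamm * (t - t'))))
          * Real.exp (-(lamn + lamm) * (t' - u)) := by
    intro u
    rw [h1 lamn u, h1 lamm u]
    have h3 : Real.exp (-(lamn + lamm) * (t' - u))
        = Real.exp (-lamn * (t' - u)) * Real.exp (-lamm * (t' - u)) := by
      rw [← Real.exp_add]; congr 1; ring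
    rw [h3]; ring
  simp only [h2]
  rw [intervalIntegral.integral_const_mul, exp_integral (lamn + lamm) 0 t' (by linarith)]
  rw [sub_zero]

lemma key_bound (lamn lamm t' t γ Λ : ℝ) (hn : 0 < lamn) (hm : 0 < lamm)
    (ht0 : 0 ≤ t') (htt : t' ≤ t) (hγ0 : 0 < γ) (hγ1 : γ ≤ 1)
    (hΛn : lamn ≤ Λ) (hΛm : lamm ≤ Λ) :
    Real.sqrt (lamn * lamm) *
      ((∫ u in t'..t, Real.exp (-(lamn + lamm) * (t - u)))
        + ∫ u in (0:ℝ)..t',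
            (Real.exp (-lamn * (t' - u)) - Real.exp (-lamn * (t - u)))
              * (Real.exp (-lamm * (t' - u)) - Real.exp (-lamm * (t - u))))
      ≤ 3/2 * Λ ^ γ * (t - t') ^ γ := by
  have hc : 0 < lamn + lamm := by linarith
  have hs : 0 ≤ t - t' := by linarith
  have hΛ : 0 < Λ := lt_of_lt_of_le hn hΛn
  rw [exp_integral (lamn + lamm) t' t hc, I2_eval lamn lamm t' t hn hm]
  set c := lamn + lamm with hcdef
  set s := t - t' with hsdef
  have hsq : Real.sqrt (lamn * lamm) ≤ c / 2 := by
    rw [show c / 2 = Real.sqrt ((c/2)^2) from (Real.sqrt_sq (by positivity)).symm]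
    apply Real.sqrt_le_sqrt; rw [hcdef]; nlinarith [sq_nonneg (lamn - lamm)]
  have hA : 1 - Real.exp (-c * s) ≤ (c * s) ^ γ := by
    rw [neg_mul]; exact one_sub_exp_le_rpow (by positivity) hγ0 hγ1
  have hA0 : 0 ≤ 1 - Real.exp (-c * s) := by
    rw [neg_mul]; exact one_sub_exp_nonneg (by positivity)
  have hBn : 1 - Real.exp (-lamn * s) ≤ (lamn * s) ^ (γ/2) := by
    rw [neg_mul]; exact one_sub_exp_le_rpow (by positivity) (by linarith) (by linarith)
  have hBm : 1 - Real.exp (-lamm * s) ≤ (lamm * s) ^ (γ/2) := by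
    rw [neg_mul]; exact one_sub_exp_le_rpow (by positivity) (by linarith) (by linarith)
  have hBn0 : 0 ≤ 1 - Real.exp (-lamn * s) := by
    rw [neg_mul]; exact one_sub_exp_nonneg (by positivity)
  have hBm0 : 0 ≤ 1 - Real.exp (-lamm * s) := by
    rw [neg_mul]; exact one_sub_exp_nonneg (by positivity)
  have hE : (1 - Real.exp (-c * t')) / c ≤ 1 / c := by
    rw [div_le_div_iff_of_pos_right hc]
    have := Real.exp_pos (-c * t'); linarith
  have hE0 : 0 ≤ (1 - Real.exp (-c * t')) / c := by
    apply div_nonneg ?_ hc.le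
    rw [neg_mul]; exact one_sub_exp_nonneg (by positivity)
  have h1 : (c * s) ^ γ ≤ 2 * Λ ^ γ * s ^ γ := by
    rw [Real.mul_rpow hc.le hs]
    have hcγ : c ^ γ ≤ 2 * Λ ^ γ := by
      calc c ^ γ ≤ (2 * Λ) ^ γ := Real.rpow_le_rpow hc.le (by rw [hcdef]; linarith) hγ0.le
        _ = 2 ^ γ * Λ ^ γ := Real.mul_rpow (by norm_num) hΛ.le
        _ ≤ 2 * Λ ^ γ := by
            have h2γ : (2:ℝ) ^ γ ≤ 2 ^ (1:ℝ) :=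
              Real.rpow_le_rpow_of_exponent_le (by norm_num) hγ1
            rw [Real.rpow_one] at h2γ
            have := Real.rpow_nonneg hΛ.le γ
            nlinarith
    have := Real.rpow_nonneg hs γ
    nlinarith
  have h2 : (lamn * s) ^ (γ/2) * (lamm * s) ^ (γ/2) ≤ Λ ^ γ * s ^ γ := by
    rw [← Real.mul_rpow (by positivity) (by positivity)]
    calc (lamn * s * (lamm * s)) ^ (γ/2) ≤ ((Λ * s) ^ 2) ^ (γ/2) := by
          apply Real.rpow_le_rpow (by positivity) ?_ (by linarith)
          nlinarith [mul_le_mul hΛn hΛm hm.le hΛ.le, sq_nonneg s, mul_nonneg hs hs]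
      _ = (Λ * s) ^ γ := by
          rw [← Real.rpow_natCast (Λ * s) 2, ← Real.rpow_mul (by positivity)]
          norm_num
          rw [show (2:ℝ) * (γ/2) = γ by ring]
      _ = Λ ^ γ * s ^ γ := Real.mul_rpow hΛ.le hs
  calc Real.sqrt (lamn * lamm) *
        ((1 - Real.exp (-c * s)) / c
          + (1 - Real.exp (-lamn * s)) * (1 - Real.exp (-lamm * s))
              * ((1 - Real.exp (-c * t')) / c))
      ≤ (c / 2) * ((c * s) ^ γ / c
          + (lamn * s) ^ (γ/2) * (lamm * s) ^ (γ/2) * (1 / c)) := by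
        apply mul_le_mul hsq ?_ ?_ (by positivity)
        · apply add_le_add
          · exact (div_le_div_iff_of_pos_right hc).2 hA
          · exact mul_le_mul (mul_le_mul hBn hBm hBm0 (Real.rpow_nonneg (by positivity) _))
              hE hE0 (by positivity)
        · have := mul_nonneg (mul_nonneg hBn0 hBm0) hE0
          positivity
    _ = ((c * s) ^ γ + (lamn * s) ^ (γ/2) * (lamm * s) ^ (γ/2)) / 2 := by
        field_simp
    _ ≤ (2 * Λ ^ γ * s ^ γ + Λ ^ γ * s ^ γ) / 2 := by
        apply (div_le_div_iff_of_pos_right (by norm_num : (0:ℝ) < 2)).2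
        exact add_le_add h1 h2
    _ = 3/2 * Λ ^ γ * s ^ γ := by ring

/-- The temporal-increment second-moment bound of the Appendix B Lemma of the paper
(via the Itô isometry, `𝔼|∇(w_Δ(t,x) − w_Δ(t',x))|² ≤ C₁|t−t'|^γ` uniformly in `x`).
Indices are shifted by one: `q k`, `ρ k n`, `lamP n` stand for `q_{k+1}`, `ρ_{n+1}^{k+1}`,
`λ'_{n+1}` respectively. -/
theorem stmt_16 (L : ℝ) (hL : 0 < L) (γ : ℝ) (hγ0 : 0 < γ) (hγ1 : γ ≤ 1)
    (D D' : ℕ) (hD : 1 ≤ D)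
    (ρ : ℕ → ℕ → ℝ)
    (hρ_mem : ∀ k n, ρ k n ∈ Set.Icc (0:ℝ) 1)
    (hρ_low : ∀ k n : ℕ, k + 1 ≤ D → D < n + 1 → ρ k n = 0)
    (hρ_high : ∀ k n : ℕ, D < k + 1 →
      ¬(D < n + 1 ∧ ((n : ℤ) - (k : ℤ)).natAbs ≤ D') → ρ k n = 0)
    (q : ℕ → ℝ) (hq_nonneg : ∀ k, 0 ≤ q k)
    (hq_sum : Summable (fun k => q k * (lamP L (k + D')) ^ γ)) :
    ∃ C₁ > (0:ℝ), ∀ t' t : ℝ, 0 ≤ t' → t' ≤ t →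
      (∑' k, q k * ∑' n, ∑' m,
          ρ k n * ρ k m * Real.sqrt (lamP L n * lamP L m)
            * ((∫ u in t'..t, Real.exp (-(lamP L n + lamP L m) * (t - u)))
              + ∫ u in (0:ℝ)..t',
                  (Real.exp (-(lamP L n) * (t' - u)) - Real.exp (-(lamP L n) * (t - u)))
                    * (Real.exp (-(lamP L m) * (t' - u))
                        - Real.exp (-(lamP L m) * (t - u)))))
        ≤ C₁ * (t - t') ^ γ := by
  classical
  have hπ := Real.pi_pos
  have hlam_pos : ∀ n, 0 < lamP L n := by
    intro n
    have : 0 < Real.pi * (n + 1) / L := by positivity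
    exact pow_pos this 2
  have hlam_mono : ∀ {n m : ℕ}, n ≤ m → lamP L n ≤ lamP L m := by
    intro n m h
    unfold lamP
    have h1 : (n:ℝ) + 1 ≤ (m:ℝ) + 1 := by exact_mod_cast Nat.succ_le_succ h
    gcongr
  set B : ℝ := ((max D (2 * D' + 1) : ℕ) : ℝ) with hBdef
  have hB1 : (1:ℝ) ≤ B := by
    rw [hBdef]; exact_mod_cast Nat.one_le_iff_ne_zero.2 (by omega)
  set P : ℕ → ℝ := fun k => (lamP L (D - 1)) ^ γ + (lamP L (k + D')) ^ γ with hPdef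
  have hP_nonneg : ∀ k, 0 ≤ P k := by
    intro k
    exact add_nonneg (Real.rpow_nonneg (hlam_pos _).le _) (Real.rpow_nonneg (hlam_pos _).le _)
  -- summability of q
  have hq_sum0 : Summable q := by
    apply Summable.of_nonneg_of_le hq_nonneg (fun k => ?_)
      (hq_sum.mul_left ((lamP L D') ^ γ)⁻¹)
    have h1 : (lamP L D') ^ γ ≤ (lamP L (k + D')) ^ γ :=
      Real.rpow_le_rpow (hlam_pos _).le (hlam_mono (by omega)) hγ0.le
    have h2 : 0 < (lamP L D') ^ γ := Real.rpow_pos_of_pos (hlam_pos _) γ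
    calc q k = ((lamP L D') ^ γ)⁻¹ * (q k * (lamP L D') ^ γ) := by field_simp
      _ ≤ ((lamP L D') ^ γ)⁻¹ * (q k * (lamP L (k + D')) ^ γ) := by
          have := hq_nonneg k
          gcongr
  have hsumP : Summable (fun k => q k * P k) := by
    have heq : (fun k => q k * P k)
        = fun k => q k * (lamP L (D - 1)) ^ γ + q k * (lamP L (k + D')) ^ γ := by
      funext k; rw [hPdef]; ring
    rw [heq]
    exact (hq_sum0.mul_right _).add hq_sum
  have hCq0 : 0 ≤ ∑' k, q k * P k :=
    tsum_nonneg (fun k => mul_nonneg (hq_nonneg k) (hP_nonneg k))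
  refine ⟨3/2 * B^2 * (∑' k, q k * P k) + 1, by positivity, ?_⟩
  intro t' t ht'0 ht't
  have hs0 : 0 ≤ t - t' := by linarith
  have hsγ : 0 ≤ (t - t') ^ γ := Real.rpow_nonneg hs0 γ
  -- per-k analysis
  have hmain : ∀ k,
      (0 ≤ q k * ∑' n, ∑' m,
          ρ k n * ρ k m * Real.sqrt (lamP L n * lamP L m)
            * ((∫ u in t'..t, Real.exp (-(lamP L n + lamP L m) * (t - u)))
              + ∫ u in (0:ℝ)..t',
                  (Real.exp (-(lamP L n) * (t' - u)) - Real.exp (-(lamP L n) * (t - u)))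
                    * (Real.exp (-(lamP L m) * (t' - u))
                        - Real.exp (-(lamP L m) * (t - u)))))
      ∧ (q k * ∑' n, ∑' m,
          ρ k n * ρ k m * Real.sqrt (lamP L n * lamP L m)
            * ((∫ u in t'..t, Real.exp (-(lamP L n + lamP L m) * (t - u)))
              + ∫ u in (0:ℝ)..t',
                  (Real.exp (-(lamP L n) * (t' - u)) - Real.exp (-(lamP L n) * (t - u)))
                    * (Real.exp (-(lamP L m) * (t' - u))
                        - Real.exp (-(lamP L m) * (t - u)))))
          ≤ (3/2 * B^2 * (t - t') ^ γ) * (q k * P k) := by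
    intro k
    set K : ℕ := max (D - 1) (k + D') with hKdef
    set F : Finset ℕ := Finset.range (K + 1) with hFdef
    set T : ℕ → ℕ → ℝ := fun n m =>
      ρ k n * ρ k m * Real.sqrt (lamP L n * lamP L m)
            * ((∫ u in t'..t, Real.exp (-(lamP L n + lamP L m) * (t - u)))
              + ∫ u in (0:ℝ)..t',
                  (Real.exp (-(lamP L n) * (t' - u)) - Real.exp (-(lamP L n) * (t - u)))
                    * (Real.exp (-(lamP L m) * (t' - u))
                        - Real.exp (-(lamP L m) * (t - u)))) with hTdef
    have hK1 : D - 1 ≤ K := le_max_left _ _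
    have hK2 : k + D' ≤ K := le_max_right _ _
    -- support
    have hsupp : ∀ n, ρ k n ≠ 0 → n ∈ F := by
      intro n hne
      rw [hFdef, Finset.mem_range]
      by_cases hk : k + 1 ≤ D
      · have hn : ¬ (D < n + 1) := fun h => hne (hρ_low k n hk h)
        omega
      · have hcond : D < n + 1 ∧ ((n:ℤ) - (k:ℤ)).natAbs ≤ D' := by
          by_contra h; exact hne (hρ_high k n (by omega) h)
        have := hcond.2
        omega
    -- integral nonneg
    have hI1 : ∀ n m : ℕ, 0 ≤ ∫ u in t'..t, Real.exp (-(lamP L n + lamP L m) * (t - u)) := by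
      intro n m
      exact intervalIntegral.integral_nonneg ht't (fun u _ => (Real.exp_pos _).le)
    have hI2 : ∀ n m : ℕ, 0 ≤ ∫ u in (0:ℝ)..t',
        (Real.exp (-(lamP L n) * (t' - u)) - Real.exp (-(lamP L n) * (t - u)))
          * (Real.exp (-(lamP L m) * (t' - u)) - Real.exp (-(lamP L m) * (t - u))) := by
      intro n m
      apply intervalIntegral.integral_nonneg ht'0
      intro u _
      have e1 : ∀ j : ℕ, Real.exp (-(lamP L j) * (t - u)) ≤ Real.exp (-(lamP L j) * (t' - u)) := by
        intro j
        apply Real.exp_le_exp.2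
        have := (hlam_pos j).le
        nlinarith
      exact mul_nonneg (by linarith [e1 n]) (by linarith [e1 m])
    have hT0 : ∀ n m, 0 ≤ T n m := by
      intro n m
      rw [hTdef]
      have h1 := (hρ_mem k n).1
      have h2 := (hρ_mem k m).1
      have h3 := Real.sqrt_nonneg (lamP L n * lamP L m)
      have := hI1 n m
      have := hI2 n m
      positivity
    -- tsum to finite sum
    have hS : (∑' n, ∑' m, T n m) = ∑ n ∈ F, ∑ m ∈ F, T n m := by
      rw [tsum_eq_sum (s := F) ?_]
      · exact Finset.sum_congr rfl fun n _ => tsum_eq_sum (fun m hm => by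
          have : ρ k m = 0 := by_contra fun h => hm (hsupp m h)
          rw [hTdef]; simp [this])
      · intro n hn
        have : ρ k n = 0 := by_contra fun h => hn (hsupp n h)
        have hz : ∀ m, T n m = 0 := fun m => by rw [hTdef]; simp [this]
        simp [hz]
    -- sum of rho bound
    have hρB : ∑ n ∈ F, ρ k n ≤ B := by
      have heq : ∑ n ∈ F, ρ k n = ∑ n ∈ F.filter (fun n => ρ k n ≠ 0), ρ k n :=
        (Finset.sum_filter_of_ne (fun n _ h => h)).symm
      have hcard : (F.filter (fun n => ρ k n ≠ 0)).card ≤ max D (2 * D' + 1) := by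
        by_cases hk : k + 1 ≤ D
        · have hsub : F.filter (fun n => ρ k n ≠ 0) ⊆ Finset.range D := by
            intro n hn
            rw [Finset.mem_filter] at hn
            rw [Finset.mem_range]
            by_contra hge
            exact hn.2 (hρ_low k n hk (by omega))
          calc (F.filter (fun n => ρ k n ≠ 0)).card ≤ (Finset.range D).card :=
                Finset.card_le_card hsub
            _ = D := Finset.card_range D
            _ ≤ max D (2 * D' + 1) := le_max_left _ _
        · have hsub : F.filter (fun n => ρ k n ≠ 0) ⊆ Finset.Icc (k - D') (k + D') := by
            intro n hn
            rw [Finset.mem_filter] at hn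
            have hcond : D < n + 1 ∧ ((n:ℤ) - (k:ℤ)).natAbs ≤ D' := by
              by_contra h; exact hn.2 (hρ_high k n (by omega) h)
            rw [Finset.mem_Icc]
            have := hcond.2
            omega
          calc (F.filter (fun n => ρ k n ≠ 0)).card ≤ (Finset.Icc (k - D') (k + D')).card :=
                Finset.card_le_card hsub
            _ = k + D' + 1 - (k - D') := Nat.card_Icc _ _
            _ ≤ 2 * D' + 1 := by omega
            _ ≤ max D (2 * D' + 1) := le_max_right _ _
      calc ∑ n ∈ F, ρ k n = ∑ n ∈ F.filter (fun n => ρ k n ≠ 0), ρ k n := heq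
        _ ≤ (F.filter (fun n => ρ k n ≠ 0)).card • (1:ℝ) :=
            Finset.sum_le_card_nsmul _ _ 1 (fun n _ => (hρ_mem k n).2)
        _ = ((F.filter (fun n => ρ k n ≠ 0)).card : ℝ) := by simp
        _ ≤ B := by rw [hBdef]; exact_mod_cast hcard
    have hρF0 : 0 ≤ ∑ n ∈ F, ρ k n := Finset.sum_nonneg (fun n _ => (hρ_mem k n).1)
    -- per-term bound
    set R : ℝ := 3/2 * (lamP L K) ^ γ * (t - t') ^ γ with hRdef
    have hR0 : 0 ≤ R := by
      rw [hRdef]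
      have := Real.rpow_nonneg (hlam_pos K).le γ
      positivity
    have hterm : ∀ n ∈ F, ∀ m ∈ F, T n m ≤ ρ k n * ρ k m * R := by
      intro n hn m hm
      rw [hFdef, Finset.mem_range] at hn hm
      have h1 := key_bound (lamP L n) (lamP L m) t' t γ (lamP L K)
        (hlam_pos n) (hlam_pos m) ht'0 ht't hγ0 hγ1
        (hlam_mono (by omega)) (hlam_mono (by omega))
      rw [hTdef, hRdef]
      dsimp only
      rw [mul_assoc]
      exact mul_le_mul_of_nonneg_left h1 (mul_nonneg (hρ_mem k n).1 (hρ_mem k m).1)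
    -- double sum bound
    have hdouble : ∑ n ∈ F, ∑ m ∈ F, T n m ≤ B * B * R := by
      calc ∑ n ∈ F, ∑ m ∈ F, T n m ≤ ∑ n ∈ F, ∑ m ∈ F, ρ k n * ρ k m * R :=
            Finset.sum_le_sum (fun n hn => Finset.sum_le_sum (fun m hm => hterm n hn m hm))
        _ = (∑ n ∈ F, ρ k n) * (∑ m ∈ F, ρ k m) * R := by
            rw [Finset.sum_mul_sum, Finset.sum_mul]
            exact Finset.sum_congr rfl fun n _ => by rw [Finset.sum_mul]
        _ ≤ B * B * R := by
            apply mul_le_mul_of_nonneg_right _ hR0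
            exact mul_le_mul hρB hρB hρF0 (le_trans (by norm_num) hB1)
    -- lamP K ^ γ ≤ P k
    have hΛP : (lamP L K) ^ γ ≤ P k := by
      simp only [hPdef]
      rcases max_choice (D - 1) (k + D') with h | h
      · rw [hKdef, h]
        have := Real.rpow_nonneg (hlam_pos (k + D')).le γ
        linarith
      · rw [hKdef, h]
        have := Real.rpow_nonneg (hlam_pos (D - 1)).le γ
        linarith
    constructor
    · apply mul_nonneg (hq_nonneg k)
      rw [hS]
      exact Finset.sum_nonneg fun n _ => Finset.sum_nonneg fun m _ => hT0 n m
    · have hRP : R ≤ 3/2 * P k * ((t - t') ^ γ) := by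
        rw [hRdef]
        exact mul_le_mul_of_nonneg_right
          (mul_le_mul_of_nonneg_left hΛP (by norm_num : (0:ℝ) ≤ 3/2)) hsγ
      have hBB : (0:ℝ) ≤ B * B := by nlinarith
      calc q k * (∑' n, ∑' m, T n m) = q k * (∑ n ∈ F, ∑ m ∈ F, T n m) := by rw [hS]
        _ ≤ q k * (B * B * R) :=
            mul_le_mul_of_nonneg_left hdouble (hq_nonneg k)
        _ ≤ q k * (B * B * (3/2 * P k * ((t - t') ^ γ))) :=
            mul_le_mul_of_nonneg_left (mul_le_mul_of_nonneg_left hRP hBB) (hq_nonneg k)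
        _ = (3/2 * B^2 * (t - t') ^ γ) * (q k * P k) := by ring
  -- conclusion
  have hgsum : Summable (fun k => (3/2 * B^2 * (t - t') ^ γ) * (q k * P k)) :=
    hsumP.mul_left _
  have hfsum : Summable (fun k => q k * ∑' n, ∑' m,
      ρ k n * ρ k m * Real.sqrt (lamP L n * lamP L m)
        * ((∫ u in t'..t, Real.exp (-(lamP L n + lamP L m) * (t - u)))
          + ∫ u in (0:ℝ)..t',
              (Real.exp (-(lamP L n) * (t' - u)) - Real.exp (-(lamP L n) * (t - u)))
                * (Real.exp (-(lamP L m) * (t' - u))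
                    - Real.exp (-(lamP L m) * (t - u))))) :=
    Summable.of_nonneg_of_le (fun k => (hmain k).1) (fun k => (hmain k).2) hgsum
  refine le_trans (Summable.tsum_le_tsum (fun k => (hmain k).2) hfsum hgsum) ?_
  rw [tsum_mul_left]
  nlinarith [hsγ, hCq0]
end

section
/- Let H be a real inner product space, let P be an orthogonal projection onto a complete subspace of H, and let δ > 0, M > 1. If v ∈ H satisfies (δ/M)·‖Pv‖² − ‖v − Pv‖² ≥ 0, then δ·‖Pv‖² − ‖v − Pv‖² ≥ (δ(M−1)/(M+δ))·‖v‖². (This is the projection inequality used in the proof of the paper's Theorem 2.5 to convert positivity of the cone functional Q_{δ/M} into a quantitative lower bound for Q_δ in terms of the full norm.) -/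
open scoped RealInnerProductSpace

/-- Projection inequality used in the proof of Theorem 2.5 of the paper:
if `(δ/M)·‖Pv‖² − ‖v − Pv‖² ≥ 0` for the orthogonal projection `P` onto a complete
subspace, then `δ·‖Pv‖² − ‖v − Pv‖² ≥ (δ(M−1)/(M+δ))·‖v‖²`. -/
theorem stmt_17 {H : Type*} [NormedAddCommGroup H] [InnerProductSpace ℝ H]
    (K : Submodule ℝ H) [CompleteSpace K]
    (δ M : ℝ) (hδ : 0 < δ) (hM : 1 < M) (v : H)
    (hcone : (δ / M) * ‖(K.orthogonalProjectionOnto v : H)‖ ^ 2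
        - ‖v - (K.orthogonalProjectionOnto v : H)‖ ^ 2 ≥ 0) :
    δ * ‖(K.orthogonalProjectionOnto v : H)‖ ^ 2 - ‖v - (K.orthogonalProjectionOnto v : H)‖ ^ 2
      ≥ (δ * (M - 1) / (M + δ)) * ‖v‖ ^ 2 := by
  set p := (K.orthogonalProjectionOnto v : H)
  have horth : ⟪p, v - p⟫ = 0 := by
    have h1 : v - p ∈ Kᗮ := K.sub_starProjection_mem_orthogonal v
    exact (Submodule.mem_orthogonal _ _).1 h1 p (K.orthogonalProjectionOnto v).2
  have hpyth : ‖v‖ ^ 2 = ‖p‖ ^ 2 + ‖v - p‖ ^ 2 := by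
    have hv : p + (v - p) = v := by abel
    calc ‖v‖ ^ 2 = ‖p + (v - p)‖ ^ 2 := by rw [hv]
      _ = ‖p‖ ^ 2 + ‖v - p‖ ^ 2 := by rw [norm_add_sq_real, horth]; ring
  have hM0 : 0 < M := lt_trans one_pos hM
  have hMδ : 0 < M + δ := by linarith
  rw [ge_iff_le, div_mul_eq_mul_div, div_le_iff₀ hMδ]
  have hc : M * ‖v - p‖ ^ 2 ≤ δ * ‖p‖ ^ 2 := by
    have h := hcone
    rw [ge_iff_le, ← sub_nonneg] at h
    have h2 : ‖v - p‖ ^ 2 ≤ δ / M * ‖p‖ ^ 2 := by linarith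
    rw [div_mul_eq_mul_div, le_div_iff₀ hM0] at h2
    linarith
  have key : (δ * ‖p‖ ^ 2 - ‖v - p‖ ^ 2) * (M + δ) - δ * (M - 1) * (‖p‖ ^ 2 + ‖v - p‖ ^ 2)
      = (1 + δ) * (δ * ‖p‖ ^ 2 - M * ‖v - p‖ ^ 2) := by ring
  have hnn : 0 ≤ (1 + δ) * (δ * ‖p‖ ^ 2 - M * ‖v - p‖ ^ 2) :=
    mul_nonneg (by linarith) (by linarith)
  rw [hpyth]
  linarith
end
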